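/- arXiv:math/0007161 — 5 statements merged into one kernel-verified Lean document; each statement's English description precedes it below -/
import Mathlib

section
/- For distinct indeterminates X_1,...,X_m and any natural number N ≥ m-1, the sum over k of X_k^N divided by the product over j≠k of (X_k - X_j) equals the complete homogeneous symmetric polynomial of degree N-m+1 in X_1,...,X_m, i.e. the sum of all monomials X_1^{i_1}···X_m^{i_m} with i_1+...+i_m = N-m+1 and all i_j ≥ 0. -/
/-!
Write `D(s)` for the divided difference `∑_{k ∈ s} f(x_k) / ∏_{j ∈ s, j ≠ k} (x_k - x_j)`.
For two nodes `a ≠ b` of `s` it satisfies `(x_b - x_a) D(s) = D(s ∖ a) - D(s ∖ b)`, and the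
complete homogeneous symmetric polynomials satisfy the same relation
`(x_b - x_a) h_d(s) = h_{d+1}(s ∖ a) - h_{d+1}(s ∖ b)`, because
`h_{d+1}(s) = x_a h_d(s) + h_{d+1}(s ∖ a)`. Strong induction on `s` then identifies the divided
difference of `t ↦ t ^ (#s - 1 + d)` with `h_d(s)`; for a single node both sides are `x_a ^ d`.
-/

open Finset

section CompleteHomogeneous

variable {ι K : Type*} [DecidableEq ι] [CommSemiring K]

noncomputable def completeHomogeneous (x : ι → K) (s : Finset ι) (d : ℕ) : K :=
  ∑ μ ∈ s.sym d, ((μ : Multiset ι).map x).prod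

lemma completeHomogeneous_singleton (x : ι → K) (a : ι) (d : ℕ) :
    completeHomogeneous x {a} d = x a ^ d := by
  simp [completeHomogeneous, Sym.coe_replicate, Multiset.map_replicate]

lemma filter_mem_sym_succ {s : Finset ι} {a : ι} (ha : a ∈ s) (d : ℕ) :
    {μ ∈ s.sym (d + 1) | a ∈ μ} = (s.sym d).image (Sym.cons a) := by
  ext μ
  simp only [mem_filter, mem_image, mem_sym_iff]
  constructor
  · rintro ⟨hμ, haμ⟩
    refine ⟨μ.erase a haμ, fun b hb => hμ b ?_, Sym.cons_erase haμ⟩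
    rw [← Sym.mem_coe, Sym.coe_erase] at hb
    exact Sym.mem_coe.mp (Multiset.mem_of_mem_erase hb)
  · rintro ⟨ν, hν, rfl⟩
    refine ⟨fun b hb => ?_, Sym.mem_cons_self a ν⟩
    rcases Sym.mem_cons.mp hb with rfl | hb
    · exact ha
    · exact hν b hb

lemma filter_notMem_sym (s : Finset ι) (a : ι) (d : ℕ) :
    {μ ∈ s.sym d | a ∉ μ} = (s.erase a).sym d := by
  ext μ
  simp only [mem_filter, mem_sym_iff, mem_erase]
  exact ⟨fun ⟨hμ, haμ⟩ b hb => ⟨fun h => haμ (h ▸ hb), hμ b hb⟩,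
    fun h => ⟨fun b hb => (h b hb).2, fun haμ => (h a haμ).1 rfl⟩⟩

lemma completeHomogeneous_succ (x : ι → K) {s : Finset ι} {a : ι} (ha : a ∈ s) (d : ℕ) :
    completeHomogeneous x s (d + 1) =
      x a * completeHomogeneous x s d + completeHomogeneous x (s.erase a) (d + 1) := by
  rw [completeHomogeneous, ← sum_filter_add_sum_filter_not _ (fun μ => a ∈ μ),
    filter_mem_sym_succ ha, filter_notMem_sym,
    sum_image fun μ _ ν _ => (Sym.cons_inj_right a μ ν).mp, completeHomogeneous, mul_sum]
  simp only [Sym.coe_cons, Multiset.map_cons, Multiset.prod_cons]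
  rfl

lemma completeHomogeneous_eq_sum_piAntidiag (x : ι → K) (s : Finset ι) (d : ℕ) :
    completeHomogeneous x s d = ∑ i ∈ s.piAntidiag d, ∏ j ∈ s, x j ^ i j := by
  rw [← map_sym_eq_piAntidiag, sum_map, completeHomogeneous]
  refine sum_congr rfl fun μ hμ => ?_
  rw [prod_multiset_map_count]
  refine prod_subset (fun j hj => mem_sym_iff.mp hμ j (Multiset.mem_toFinset.mp hj))
    fun j _ hj => ?_
  simp [Multiset.count_eq_zero_of_notMem (mt Multiset.mem_toFinset.mpr hj)]

end CompleteHomogeneous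

section DividedDifference

variable {ι K : Type*} [DecidableEq ι] [Field K]

def dividedDifference (f : K → K) (x : ι → K) (s : Finset ι) : K :=
  ∑ k ∈ s, f (x k) / ∏ j ∈ s.erase k, (x k - x j)

lemma dividedDifference_erase (f : K → K) {x : ι → K} {s : Finset ι} (hx : Set.InjOn x s)
    {a : ι} (ha : a ∈ s) :
    dividedDifference f x (s.erase a) =
      ∑ k ∈ s, (x k - x a) * (f (x k) / ∏ j ∈ s.erase k, (x k - x j)) := by
  rw [← add_sum_erase s _ ha, sub_self, zero_mul, zero_add, dividedDifference]
  refine sum_congr rfl fun k hk => ?_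
  obtain ⟨hka, hks⟩ := mem_erase.mp hk
  have hxka : x k - x a ≠ 0 := sub_ne_zero.mpr fun h => hka (hx hks ha h)
  rw [erase_right_comm, ← mul_prod_erase (s.erase k) _ (mem_erase.mpr ⟨Ne.symm hka, ha⟩),
    ← mul_div_assoc, mul_div_mul_left _ _ hxka]

lemma sub_mul_dividedDifference (f : K → K) {x : ι → K} {s : Finset ι} (hx : Set.InjOn x s)
    {a b : ι} (ha : a ∈ s) (hb : b ∈ s) :
    (x b - x a) * dividedDifference f x s =
      dividedDifference f x (s.erase a) - dividedDifference f x (s.erase b) := by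
  rw [dividedDifference_erase f hx ha, dividedDifference_erase f hx hb, ← sum_sub_distrib,
    dividedDifference, mul_sum]
  exact sum_congr rfl fun k _ => by ring

lemma dividedDifference_pow {x : ι → K} {s : Finset ι} (hx : Set.InjOn x s) (hs : s.Nonempty)
    (d : ℕ) : dividedDifference (· ^ (#s - 1 + d)) x s = completeHomogeneous x s d := by
  induction s using Finset.strongInduction generalizing d with
  | H s ih =>
  obtain ⟨a, rfl⟩ | hs := hs.exists_eq_singleton_or_nontrivial
  · simp [dividedDifference, completeHomogeneous_singleton]
  have hcard : 1 < #s := one_lt_card_iff_nontrivial.mpr hs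
  have herase {c : ι} (hc : c ∈ s) : dividedDifference (· ^ (#s - 1 + d)) x (s.erase c) =
      completeHomogeneous x (s.erase c) (d + 1) := by
    have := ih _ (erase_ssubset hc) (hx.mono (coe_subset.mpr (erase_subset c s)))
      hs.erase_nonempty (d + 1)
    rwa [card_erase_of_mem hc, show #s - 1 - 1 + (d + 1) = #s - 1 + d by omega] at this
  obtain ⟨a, ha, b, hb, hab⟩ := hs
  refine mul_left_cancel₀ (sub_ne_zero.mpr fun h => hab (hx ha hb h.symm) : x b - x a ≠ 0) ?_
  rw [sub_mul_dividedDifference _ hx ha hb, herase ha, herase hb]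
  linear_combination completeHomogeneous_succ x hb d - completeHomogeneous_succ x ha d

end DividedDifference

/-- Lagrange/partial-fraction identity: for distinct indeterminates
`X 1, ..., X m` and `N ≥ m - 1`, the weighted power sum equals the complete
homogeneous symmetric polynomial of degree `N - m + 1`. -/
theorem stmt0 (m N : ℕ) (hm : 1 ≤ m) (hN : m - 1 ≤ N) :
    let R := MvPolynomial (Fin m) ℤ
    let K := FractionRing R
    let X : Fin m → K := fun k => algebraMap R K (MvPolynomial.X k)
    ∑ k : Fin m, (X k) ^ N / ∏ j ∈ Finset.univ.erase k, (X k - X j) =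
      algebraMap R K
        (∑ i ∈ Finset.Nat.antidiagonalTuple m (N - (m - 1)),
          ∏ j : Fin m, MvPolynomial.X j ^ i j) := by
  intro R K X
  have : Nonempty (Fin m) := ⟨⟨0, hm⟩⟩
  have hX : Function.Injective X :=
    (IsFractionRing.injective R K).comp MvPolynomial.X_injective
  have h := dividedDifference_pow hX.injOn univ_nonempty (N - (m - 1))
  rw [card_univ, Fintype.card_fin, Nat.add_sub_cancel' hN, completeHomogeneous_eq_sum_piAntidiag,
    piAntidiag_univ_fin_eq_antidiagonalTuple] at h
  simp only [map_sum, map_prod, map_pow]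
  exact h
end

section
/- Let R be a commutative ring and P ∈ R[X_1,...,X_m][Y] a polynomial. Then the element ∑_{k=1}^m P(X_k) / ∏_{j≠k}(X_k - X_j), computed in the fraction field of R[X_1,...,X_m] (with X_i indeterminates), lies in R[X_1,...,X_m]. -/
open Finset Polynomial

/-!
Reducing `P` modulo the monic nodal polynomial `∏ₖ (Y - Xₖ)` keeps its values at the nodes and
brings its degree below `m`. For a polynomial of degree `< m`, Lagrange interpolation shows that the
sum is its coefficient of `Y ^ (m - 1)`, and the remainder `P %ₘ ∏ₖ (Y - Xₖ)` has coefficients in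
`R[X_1,…,X_m]` because the divisor is monic.
-/

theorem Lagrange.sum_div_prod_sub_eq_algebraMap_coeff_modByMonic_nodal
    {S K ι : Type*} [CommRing S] [Field K] [Algebra S K] [DecidableEq ι]
    (s : Finset ι) (a : ι → S) (ha : Set.InjOn (algebraMap S K ∘ a) s) (P : S[X]) :
    ∑ i ∈ s, algebraMap S K (P.eval (a i)) /
        ∏ j ∈ s.erase i, (algebraMap S K (a i) - algebraMap S K (a j)) =
      algebraMap S K ((P %ₘ nodal s a).coeff (#s - 1)) := by
  have : Nontrivial S := (algebraMap S K).domain_nontrivial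
  set f : K[X] := (P %ₘ nodal s a).map (algebraMap S K)
  have hf_eval : ∀ i ∈ s, f.eval (algebraMap S K (a i)) = algebraMap S K (P.eval (a i)) := by
    intro i hi
    have h_root : aeval (algebraMap S K (a i)) (nodal s a) = 0 := by
      rw [aeval_algebraMap_apply, coe_aeval_eq_eval, eval_nodal_at_node hi, map_zero]
    rw [eval_map_algebraMap, aeval_modByMonic_eq_self_of_root h_root, aeval_algebraMap_apply,
      coe_aeval_eq_eval]
  have hf_degree : f.degree < #s :=
    degree_map_le.trans_lt <| (degree_modByMonic_lt P nodal_monic).trans_eq degree_nodal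
  calc _ = ∑ i ∈ s, f.eval (algebraMap S K (a i)) /
        ∏ j ∈ s.erase i, (algebraMap S K (a i) - algebraMap S K (a j)) :=
        sum_congr rfl fun i hi => by rw [hf_eval i hi]
    _ = f.coeff (#s - 1) := (coeff_eq_sum ha hf_degree).symm
    _ = _ := coeff_map _ _

/-- For a domain `R` and `P ∈ R[X_1,…,X_m][Y]`, the Lagrange sum
`∑ₖ P(Xₖ) / ∏_{j≠k} (Xₖ - Xⱼ)`, computed in the fraction field of
`R[X_1,…,X_m]`, lies in (the image of) `R[X_1,…,X_m]`. -/
theorem stmt2 (R : Type*) [CommRing R] [IsDomain R] (m : ℕ)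
    (P : Polynomial (MvPolynomial (Fin m) R)) :
    let S := MvPolynomial (Fin m) R
    let K := FractionRing S
    let X : Fin m → K := fun k => algebraMap S K (MvPolynomial.X k)
    ∃ q : S,
      ∑ k : Fin m,
          algebraMap S K (P.eval (MvPolynomial.X k)) /
            ∏ j ∈ Finset.univ.erase k, (X k - X j) =
        algebraMap S K q := by
  intro S K X
  have hX : Function.Injective X :=
    (IsFractionRing.injective S K).comp MvPolynomial.X_injective
  exact ⟨_, Lagrange.sum_div_prod_sub_eq_algebraMap_coeff_modByMonic_nodal _ _ hX.injOn P⟩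
end

section
/- Let W be an n-dimensional real vector space, Δ = {v_1,...,v_d} a finite set, and τ : Δ → W an injective map whose values τ(v_1),...,τ(v_d) have pairwise differences invertible in the fraction field Q(W) of the symmetric algebra S(W). Define for g : Δ → Q(W) the integral ∫_Δ g = ∑_k g(v_k)/∏_{j≠k}(τ(v_k) − τ(v_j)), and let H(Δ,τ) be the set of maps g such that ∫_Δ (g · P(τ)) ∈ S(W) for all polynomials P ∈ S(W)[Y] (where P(τ) denotes the map v ↦ P evaluated at Y = τ(v)). Then g ∈ H(Δ,τ) if and only if there exist g_0,...,g_{d-1} ∈ S(W) with g(v) = ∑_{k=0}^{d-1} g_k τ(v)^k for all v ∈ Δ. -/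
/-!
Let `N = ∏ (Y - τ(vⱼ)) ∈ S[Y]` be the nodal polynomial. The coefficient of `Yⁱ` in the Lagrange
interpolant of `g` is `∫_Δ g · Pᵢ(τ)`, where `Pᵢ(a)` is the coefficient of `Yⁱ` in `N /ₘ (Y - a)`,
a polynomial in `a` over `S`; so the hypothesis makes the interpolant integral. Conversely, for
`F ∈ S[Y]` the integral `∫_Δ F(τ)` is the top coefficient of the interpolant `F %ₘ N`, which has
coefficients in `S` because `N` is monic over `S`.
-/

open Finset Polynomial Lagrange

theorem Polynomial.exists_eval_eq_coeff_divByMonic_X_sub_C {R : Type*} [CommRing R]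
    (p : R[X]) (n : ℕ) : ∃ q : R[X], ∀ a, q.eval a = (p /ₘ (X - C a)).coeff n :=
  ⟨∑ i ∈ Icc (n + 1) p.natDegree, C (p.coeff i) * X ^ (i - (n + 1)), fun a => by
    simp only [coeff_divByMonic_X_sub_C, eval_finsetSum, eval_mul, eval_C, eval_pow, eval_X]
    exact sum_congr rfl fun _ _ => mul_comm _ _⟩

namespace Lagrange

theorem nodal_map {ι R S : Type*} [CommRing R] [CommRing S] (φ : R →+* S) (s : Finset ι)
    (v : ι → R) : (nodal s v).map φ = nodal s (φ ∘ v) := by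
  simp [nodal, Polynomial.map_prod]

variable {ι F : Type*} [DecidableEq ι] [Field F]

theorem coeff_interpolate (s : Finset ι) (v : ι → F) (r : ι → F) (n : ℕ) :
    (interpolate s v r).coeff n =
      ∑ i ∈ s, r i * (nodal s v /ₘ (X - C (v i))).coeff n / ∏ j ∈ s.erase i, (v i - v j) := by
  rw [interpolate_eq_nodalWeight_mul_nodal_div_X_sub_C, finsetSum_coeff]
  refine sum_congr rfl fun i _ => ?_
  rw [coeff_mul_C, coeff_C_mul, ← divByMonic_eq_div _ (monic_X_sub_C _), nodalWeight,
    prod_inv_distrib]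
  ring

end Lagrange

section

variable {ι S K : Type*} [DecidableEq ι] [CommRing S] [Field K] (φ : S →+* K)

theorem exists_coeff_interpolate_comp_eq_sum (s : Finset ι) (τ : ι → S) (n : ℕ) :
    ∃ P : S[X], ∀ r : ι → K, (interpolate s (φ ∘ τ) r).coeff n =
      ∑ k ∈ s, r k * φ (P.eval (τ k)) / ∏ j ∈ s.erase k, (φ (τ k) - φ (τ j)) := by
  obtain ⟨P, hP⟩ := (nodal s τ).exists_eval_eq_coeff_divByMonic_X_sub_C n
  refine ⟨P, fun r => ?_⟩
  rw [coeff_interpolate]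
  refine sum_congr rfl fun k _ => ?_
  rw [hP, ← coeff_map, map_divByMonic φ (monic_X_sub_C _), nodal_map]
  simp

theorem exists_sum_eval_div_prod_sub_eq {s : Finset ι} {τ : ι → S}
    (hτ : Set.InjOn (φ ∘ τ) s) (F : S[X]) : ∃ a : S,
    ∑ k ∈ s, φ (F.eval (τ k)) / ∏ j ∈ s.erase k, (φ (τ k) - φ (τ j)) = φ a := by
  have := φ.domain_nontrivial
  have hdeg : ((F %ₘ nodal s τ).map φ).degree < #s :=
    degree_map_le.trans_lt (degree_nodal (v := τ) ▸ degree_modByMonic_lt F nodal_monic)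
  refine ⟨(F %ₘ nodal s τ).coeff (#s - 1), ?_⟩
  rw [← coeff_map, coeff_eq_sum hτ hdeg]
  refine sum_congr rfl fun k hk => ?_
  rw [Function.comp_apply, eval_map_apply, modByMonic_eq_sub_mul_div F (nodal s τ), eval_sub,
    eval_mul, eval_nodal_at_node hk, zero_mul, sub_zero]
  rfl

end

/-- Let `S = S(W)` be the symmetric algebra (a polynomial ring in `n`
variables) of an `n`-dimensional real vector space with fraction field `Q`,
`Δ = {v_1,…,v_d}` a finite set and `τ : Δ → S` injective.  With
`∫_Δ g = ∑ₖ g(vₖ)/∏_{j≠k}(τ(vₖ)-τ(vⱼ))`, a map `g : Δ → Q` satisfies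
`∫_Δ g·P(τ) ∈ S` for every `P ∈ S[Y]` if and only if there are
`g_0,…,g_{d-1} ∈ S` with `g = ∑_{k=0}^{d-1} g_k τᵏ`. -/
theorem stmt8 (n d : ℕ) (τ : Fin d → MvPolynomial (Fin n) ℝ)
    (hτ : Function.Injective τ) (g : Fin d → FractionRing (MvPolynomial (Fin n) ℝ)) :
    let S := MvPolynomial (Fin n) ℝ
    let Q := FractionRing S
    let aτ : Fin d → Q := fun k => algebraMap S Q (τ k)
    (∀ P : Polynomial S, ∃ s : S,
        ∑ k : Fin d,
            g k * algebraMap S Q (P.eval (τ k)) /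
              ∏ j ∈ Finset.univ.erase k, (aτ k - aτ j) =
          algebraMap S Q s) ↔
      ∃ c : Fin d → S, ∀ v : Fin d,
        g v = ∑ k : Fin d, algebraMap S Q (c k) * (aτ v) ^ (k : ℕ) := by
  intro S Q aτ
  set φ := algebraMap S Q
  have haτ : Set.InjOn (φ ∘ τ) (univ : Finset (Fin d)) :=
    ((IsFractionRing.injective S Q).comp hτ).injOn
  constructor
  · intro h
    set L := interpolate univ (φ ∘ τ) g
    have hL : L ∈ degreeLT Q d := mem_degreeLT.2 <| by
      simpa only [card_univ, Fintype.card_fin] using degree_interpolate_lt g haτ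
    have hcoeff (i : Fin d) : ∃ c : S, φ c = L.coeff i := by
      obtain ⟨P, hP⟩ := exists_coeff_interpolate_comp_eq_sum φ univ τ i
      obtain ⟨c, hc⟩ := h P
      exact ⟨c, by rw [hP, hc]⟩
    choose c hc using hcoeff
    refine ⟨c, fun v => ?_⟩
    rw [← eval_interpolate_at_node g haτ (mem_univ v), eval_eq_sum_degreeLTEquiv hL]
    simp_rw [hc]
    rfl
  · rintro ⟨c, hc⟩ P
    let G : S[X] := ∑ k : Fin d, C (c k) * X ^ (k : ℕ)
    have hG (k : Fin d) : g k * φ (P.eval (τ k)) = φ ((G * P).eval (τ k)) := by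
      simp [G, hc k, eval_finsetSum, aτ, φ]
    simp_rw [hG]
    exact exists_sum_eval_div_prod_sub_eq φ haτ (G * P)
end

section
/- In the setting of the previous item, every element g of H(Δ,τ) takes values in S(W): i.e. H(Δ,τ) ⊂ Maps(Δ, S(W)). -/
open Finset

/-- In the setting of Lemma 14.1: every element `g` of `H(Δ,τ)` (i.e. every
`g : Δ → Q(W)` with `∫_Δ g·P(τ) ∈ S(W)` for all `P ∈ S(W)[Y]`) takes values
in `S(W)`. -/
theorem stmt9 (n d : ℕ) (τ : Fin d → MvPolynomial (Fin n) ℝ)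
    (hτ : Function.Injective τ) (g : Fin d → FractionRing (MvPolynomial (Fin n) ℝ))
    (hg : ∀ P : Polynomial (MvPolynomial (Fin n) ℝ),
      ∃ s : MvPolynomial (Fin n) ℝ,
        ∑ k : Fin d,
            g k * algebraMap (MvPolynomial (Fin n) ℝ) _ (P.eval (τ k)) /
              ∏ j ∈ Finset.univ.erase k,
                (algebraMap (MvPolynomial (Fin n) ℝ) _ (τ k) -
                  algebraMap (MvPolynomial (Fin n) ℝ) _ (τ j)) =
          algebraMap (MvPolynomial (Fin n) ℝ) _ s) :
    ∀ v : Fin d, ∃ s : MvPolynomial (Fin n) ℝ,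
      g v = algebraMap (MvPolynomial (Fin n) ℝ) _ s := by
  intro v
  obtain ⟨s, hs⟩ := hg (∏ j ∈ Finset.univ.erase v, (Polynomial.X - Polynomial.C (τ j)))
  refine ⟨s, ?_⟩
  rw [← hs, Finset.sum_eq_single v]
  · have heval : (∏ j ∈ Finset.univ.erase v,
        (Polynomial.X - Polynomial.C (τ j))).eval (τ v)
        = ∏ j ∈ Finset.univ.erase v, (τ v - τ j) := by
      simp [Polynomial.eval_prod]
    rw [heval, map_prod]
    have hfac : ∀ j ∈ Finset.univ.erase v,
        algebraMap (MvPolynomial (Fin n) ℝ) (FractionRing (MvPolynomial (Fin n) ℝ)) (τ v - τ j)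
          = algebraMap _ _ (τ v) - algebraMap _ _ (τ j) := fun j _ => map_sub _ _ _
    rw [Finset.prod_congr rfl hfac]
    have hD : (∏ j ∈ Finset.univ.erase v,
        (algebraMap (MvPolynomial (Fin n) ℝ) (FractionRing (MvPolynomial (Fin n) ℝ)) (τ v)
          - algebraMap _ _ (τ j))) ≠ 0 := by
      refine Finset.prod_ne_zero_iff.mpr fun j hj => sub_ne_zero.mpr ?_
      have hne : τ v ≠ τ j := fun h => (Finset.mem_erase.mp hj).1 (hτ h.symm)
      exact fun h => hne (IsFractionRing.injective (MvPolynomial (Fin n) ℝ)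
        (FractionRing (MvPolynomial (Fin n) ℝ)) h)
    field_simp
  · intro k _ hk
    have hz : (∏ j ∈ Finset.univ.erase v,
        (Polynomial.X - Polynomial.C (τ j))).eval (τ k) = 0 := by
      rw [Polynomial.eval_prod]
      exact Finset.prod_eq_zero (Finset.mem_erase.mpr ⟨hk, Finset.mem_univ k⟩) (by simp)
    simp [hz]
  · simp
end

section
/- Let Δ_c = {e_1,...,e_r} and Δ_{c'} = {e_{r+1},...,e_d} with associated elements β_1,...,β_d ∈ 𝔤*_ξ such that β_i ≠ β_a for all i ≤ r < a (genericity). Given f_i ∈ Maps(Δ_c, Q(𝔤*_ξ)) for i = 1,...,s−1 (s = d−r) and f ∈ Maps(V_c, Q(𝔤*_ξ)), there exist unique f' ∈ Maps(V_{c'}, Q(𝔤*_ξ)) and f'_j ∈ Maps(Δ_{c'}, Q(𝔤*_ξ)) for j = 1,...,r−1 satisfying, on each Δ_c × {e_a}, the Vandermonde-type equation f' + ∑_{j=1}^{r−1} (τ^#)^j f'_j = f + ∑_{i=1}^{s−1} (τ^#)^i f_i, where τ^#(e_i, e_a) = β_i − β_a, and f' = f on V_c − Δ_c = V_{c'} −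 Δ_{c'}. -/
open Finset Matrix

private lemma sum_split_vdm {K : Type*} [Field K] {r : ℕ} (hr : 0 < r) (c : K) (y : ℕ → K) :
    ∑ j : Fin r, c ^ (j : ℕ) * y (j : ℕ) = y 0 + ∑ j ∈ Finset.Ico 1 r, c ^ j * y j := by
  rw [Fin.sum_univ_eq_sum_range (fun j => c ^ j * y j) r, Finset.range_eq_Ico,
    Finset.sum_eq_sum_Ico_succ_bot hr]
  simp

/-- The Vandermonde-type change-of-cross-section equation.  With
`Δ_c = {e_1,…,e_r}`, `Δ_{c'} = {e_{r+1},…,e_d}` and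
`β_1,…,β_r, γ_{r+1},…,γ_d ∈ 𝔤*_ξ` distinct as required by genericity
(`β i ≠ γ a`, and the `β i` pairwise distinct), and with `Q = Q(𝔤*_ξ)` the
fraction field of `S(𝔤*_ξ)`: for every `f ∈ Maps(V_c, Q)` and
`f_i ∈ Maps(Δ_c, Q)`, `i = 1,…,s-1`, there exist unique
`f' ∈ Maps(V_{c'}, Q)` and `f'_j ∈ Maps(Δ_{c'}, Q)`, `j = 1,…,r-1`, with
`f' = f` on `V_c - Δ_c = V_{c'} - Δ_{c'}` and, at each point
`(e_i, e_a) ∈ Δ_c × Δ_{c'}`,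
`f'(e_a) + ∑_{j=1}^{r-1} (β_i-γ_a)^j f'_j(e_a)
  = f(e_i) + ∑_{k=1}^{s-1} (β_i-γ_a)^k f_k(e_i)`. -/
theorem stmt18 (n : ℕ) (V' : Type*) (r s : ℕ) (hr : 1 ≤ r) (hs : 1 ≤ s)
    (β : Fin r → FractionRing (MvPolynomial (Fin n) ℝ))
    (γ : Fin s → FractionRing (MvPolynomial (Fin n) ℝ))
    (hβ : Function.Injective β) (hgen : ∀ i a, β i ≠ γ a)
    (f : V' ⊕ Fin r → FractionRing (MvPolynomial (Fin n) ℝ))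
    (fi : ℕ → Fin r → FractionRing (MvPolynomial (Fin n) ℝ)) :
    ∃ (g : V' ⊕ Fin s → FractionRing (MvPolynomial (Fin n) ℝ))
      (gj : ℕ → Fin s → FractionRing (MvPolynomial (Fin n) ℝ)),
      ((∀ v : V', g (Sum.inl v) = f (Sum.inl v)) ∧
        ∀ (i : Fin r) (a : Fin s),
          g (Sum.inr a) + ∑ j ∈ Finset.Ico 1 r, (β i - γ a) ^ j * gj j a =
            f (Sum.inr i) +
              ∑ k ∈ Finset.Ico 1 s, (β i - γ a) ^ k * fi k i) ∧
      ∀ (g' : V' ⊕ Fin s → FractionRing (MvPolynomial (Fin n) ℝ))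
        (gj' : ℕ → Fin s → FractionRing (MvPolynomial (Fin n) ℝ)),
        ((∀ v : V', g' (Sum.inl v) = f (Sum.inl v)) ∧
          ∀ (i : Fin r) (a : Fin s),
            g' (Sum.inr a) + ∑ j ∈ Finset.Ico 1 r, (β i - γ a) ^ j * gj' j a =
              f (Sum.inr i) +
                ∑ k ∈ Finset.Ico 1 s, (β i - γ a) ^ k * fi k i) →
        g' = g ∧ ∀ j ∈ Finset.Ico 1 r, ∀ a : Fin s, gj' j a = gj j a := by
  classical
  have hr0 : 0 < r := hr
  set M : Fin s → Matrix (Fin r) (Fin r) (FractionRing (MvPolynomial (Fin n) ℝ)) :=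
    fun a => Matrix.vandermonde (fun i => β i - γ a) with hM
  have hdet : ∀ a, IsUnit (M a).det := by
    intro a
    rw [hM, Matrix.det_vandermonde]
    refine (Finset.prod_ne_zero_iff.mpr fun i _ =>
      Finset.prod_ne_zero_iff.mpr fun j hj => ?_).isUnit
    intro h
    exact (Finset.mem_Ioi.mp hj).ne' (hβ (sub_left_inj.mp (sub_eq_zero.mp h)))
  set b : Fin s → Fin r → FractionRing (MvPolynomial (Fin n) ℝ) :=
    fun a i => f (Sum.inr i) + ∑ k ∈ Finset.Ico 1 s, (β i - γ a) ^ k * fi k i with hb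
  set x : Fin s → Fin r → FractionRing (MvPolynomial (Fin n) ℝ) :=
    fun a => (M a)⁻¹ *ᵥ b a with hx
  have hMx : ∀ a, (M a) *ᵥ x a = b a := by
    intro a
    rw [hx, Matrix.mulVec_mulVec, Matrix.mul_nonsing_inv _ (hdet a), Matrix.one_mulVec]
  set y : Fin s → ℕ → FractionRing (MvPolynomial (Fin n) ℝ) :=
    fun a j => if h : j < r then x a ⟨j, h⟩ else 0 with hy
  have hyx : ∀ (a : Fin s) (j : Fin r), y a (j : ℕ) = x a j := by
    intro a j
    simp [hy, j.isLt]
  have key : ∀ (a : Fin s) (z : ℕ → FractionRing (MvPolynomial (Fin n) ℝ)) (i : Fin r),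
      ((M a) *ᵥ (fun j : Fin r => z (j : ℕ))) i
        = z 0 + ∑ j ∈ Finset.Ico 1 r, (β i - γ a) ^ j * z j := by
    intro a z i
    rw [Matrix.mulVec, dotProduct]
    simpa [hM, Matrix.vandermonde] using sum_split_vdm hr0 (β i - γ a) z
  refine ⟨Sum.elim (fun v => f (Sum.inl v)) (fun a => y a 0), fun j a => y a j,
    ⟨fun v => rfl, ?_⟩, ?_⟩
  · intro i a
    have h1 : (fun j : Fin r => y a (j : ℕ)) = x a := funext fun j => hyx a j
    have h2 := key a (y a) i
    rw [h1, hMx a] at h2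
    simpa [hb] using h2.symm
  · rintro g' gj' ⟨hg'1, hg'2⟩
    set y' : Fin s → ℕ → FractionRing (MvPolynomial (Fin n) ℝ) :=
      fun a j => if j = 0 then g' (Sum.inr a) else gj' j a with hy'
    have hMx' : ∀ a, (M a) *ᵥ (fun j : Fin r => y' a (j : ℕ)) = b a := by
      intro a
      funext i
      rw [key a (y' a) i]
      have h3 : ∑ j ∈ Finset.Ico 1 r, (β i - γ a) ^ j * y' a j
          = ∑ j ∈ Finset.Ico 1 r, (β i - γ a) ^ j * gj' j a := by
        refine Finset.sum_congr rfl fun j hj => ?_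
        have hjne : j ≠ 0 := by have := (Finset.mem_Ico.mp hj).1; omega
        simp [hy', hjne]
      rw [h3]
      simp only [hy', if_pos rfl]
      exact hg'2 i a
    have hxx : ∀ a, (fun j : Fin r => y' a (j : ℕ)) = x a := by
      intro a
      have h2 : (fun j : Fin r => y' a (j : ℕ))
          = (M a)⁻¹ *ᵥ ((M a) *ᵥ fun j : Fin r => y' a (j : ℕ)) := by
        rw [Matrix.mulVec_mulVec, Matrix.nonsing_inv_mul _ (hdet a), Matrix.one_mulVec]
      rw [h2, hMx' a, hx]
    have hx0 : ∀ a, g' (Sum.inr a) = y a 0 := by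
      intro a
      have h : y' a 0 = x a ⟨0, hr0⟩ := congrFun (hxx a) ⟨0, hr0⟩
      have h0 : y' a 0 = g' (Sum.inr a) := if_pos rfl
      have h1 : y a 0 = x a ⟨0, hr0⟩ := dif_pos hr0
      rw [h1, ← h, h0]
    constructor
    · funext v
      cases v with
      | inl v => simpa using hg'1 v
      | inr a => simpa using hx0 a
    · intro j hj a
      obtain ⟨hj1, hj2⟩ := Finset.mem_Ico.mp hj
      have h : y' a j = x a ⟨j, hj2⟩ := congrFun (hxx a) ⟨j, hj2⟩
      have hjne : j ≠ 0 := by omega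
      have h0 : y' a j = gj' j a := if_neg hjne
      have h1 : y a j = x a ⟨j, hj2⟩ := dif_pos hj2
      show gj' j a = y a j
      rw [h1, ← h, h0]
end
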